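/- arXiv:1403.3949 — 4 statements merged into one kernel-verified Lean document; each statement's English description precedes it below -/
import Mathlib

section
/- Let d ≥ 2 and m ≥ 1 be integers, and let C > 0, h > 0, δ ∈ (0,1]. Then the sum ∑_{j=1}^∞ log(1 + C δ^{-1} h^{-2m} j^{-2m/(d-1)}) is bounded by C_m h^{-(d-1)} δ^{-(d-1)/(2m)}, where C_m = C^{(d-1)/(2m)} ∫_0^∞ log(1 + t^{-2m/(d-1)}) dt is finite provided 2m > d-1. -/
/-!
Writing `p = 2m/(d-1) > 1` and `a = C δ⁻¹ h^(-2m)`, the summand `log (1 + a t^(-p))` is a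
nonnegative decreasing function of `t > 0`, so its sum over `j ≥ 1` is at most its integral over
`(0, ∞)`. That integral is finite: near `0` the integrand is `O(t^(-1/2))` because
`log x ≤ x^ε / ε`, and near `∞` it is at most `a t^(-p)`.
The substitution `t = a^(1/p) s` turns it into `a^(1/p) ∫ log (1 + s^(-p)) ds`, and
`a^(1/p) = C^((d-1)/2m) h^(-(d-1)) δ^(-(d-1)/2m)`.
-/

open Real MeasureTheory Set

/-- Unlike `AntitoneOn.tsum_add_one_le_integral`, only antitonicity on `(0, ∞)` is assumed, so
that `f` may blow up at `0`. -/
theorem AntitoneOn.tsum_pnat_le_integral_Ioi {f : ℝ → ℝ} (anti : AntitoneOn f (Ioi 0))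
    (integrable : IntegrableOn f (Ioi 0)) (nonneg : ∀ t ∈ Ioi 0, 0 ≤ f t) :
    ∑' n : ℕ+, f n ≤ ∫ t in Ioi 0, f t := by
  have anti₁ : AntitoneOn f (Ici ((1 : ℕ) : ℝ)) :=
    anti.mono fun t ht => lt_of_lt_of_le one_pos (by simpa using ht)
  have integrable₁ : IntegrableOn f (Ioi ((1 : ℕ) : ℝ)) :=
    integrable.mono_set (Ioi_subset_Ioi (by simp))
  have nonneg₁ : ∀ t ∈ Ioi ((1 : ℕ) : ℝ), 0 ≤ f t :=
    fun t ht => nonneg t (lt_trans one_pos (by simpa using ht))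
  have head : f 1 ≤ ∫ t in (0 : ℝ)..1, f t := by
    rw [intervalIntegral.integral_of_le zero_le_one]
    simpa using setIntegral_ge_of_const_le_real (μ := volume) measurableSet_Ioc (by simp)
      (fun t ht => anti ht.1 (mem_Ioi.2 one_pos) ht.2) (integrable.mono_set Ioc_subset_Ioi_self)
  have tail := anti₁.tsum_comp_add_le_integral 1 integrable₁ nonneg₁
  have summable :=
    (summable_nat_add_iff 1).2 (anti₁.summable_of_integrableOn_Ioi integrable₁ nonneg₁)
  rw [tsum_pnat_eq_tsum_succ (f := fun n : ℕ => f n), summable.tsum_eq_zero_add,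
    ← intervalIntegral.integral_interval_add_Ioi integrable integrable₁]
  push_cast at tail ⊢
  linarith

theorem log_one_add_mul_rpow_neg_nonneg {a p t : ℝ} (ha : 0 ≤ a) (ht : 0 ≤ t) :
    0 ≤ log (1 + a * t ^ (-p)) :=
  log_nonneg (le_add_of_nonneg_right (mul_nonneg ha (rpow_nonneg ht _)))

theorem antitoneOn_log_one_add_mul_rpow_neg {a p : ℝ} (ha : 0 ≤ a) (hp : 0 ≤ p) :
    AntitoneOn (fun t => log (1 + a * t ^ (-p))) (Ioi 0) := fun x hx y _ hxy => by
  have hy : 0 ≤ y ^ (-p) := rpow_nonneg (hx.out.le.trans hxy) _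
  apply log_le_log (by positivity)
  gcongr 1 + a * ?_
  exact rpow_le_rpow_of_nonpos hx hxy (neg_nonpos.2 hp)

theorem log_one_add_rpow_neg_le {p ε t : ℝ} (hp : 0 ≤ p) (hε : 0 < ε) (ht₀ : 0 < t)
    (ht₁ : t ≤ 1) :
    log (1 + t ^ (-p)) ≤ (2 ^ ε / ε) * t ^ (-(p * ε)) := by
  have one_le : 1 ≤ t ^ (-p) := one_le_rpow_of_pos_of_le_one_of_nonpos ht₀ ht₁ (by linarith)
  calc log (1 + t ^ (-p)) ≤ log (2 * t ^ (-p)) := by gcongr; linarith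
    _ ≤ (2 * t ^ (-p)) ^ ε / ε := log_le_rpow_div (by positivity) hε
    _ = (2 ^ ε / ε) * t ^ (-(p * ε)) := by
      rw [mul_rpow zero_le_two (by positivity), ← rpow_mul ht₀.le, neg_mul]; ring

theorem integrableOn_log_one_add_rpow_neg {p : ℝ} (hp : 1 < p) :
    IntegrableOn (fun t => log (1 + t ^ (-p))) (Ioi 0) := by
  have meas : AEStronglyMeasurable (fun t : ℝ => log (1 + t ^ (-p))) :=
    (by fun_prop : Measurable fun t : ℝ => log (1 + t ^ (-p))).aestronglyMeasurable
  have nonneg : ∀ t : ℝ, 0 < t → 0 ≤ log (1 + t ^ (-p)) := fun t ht => by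
    simpa using log_one_add_mul_rpow_neg_nonneg (p := p) zero_le_one ht.le
  rw [← Ioc_union_Ioi_eq_Ioi zero_le_one]
  refine IntegrableOn.union ?_ ?_
  · have hε : 0 < (2 * p)⁻¹ := by positivity
    have hpε : -(p * (2 * p)⁻¹) = -(1 / 2) := by field_simp
    have dom : IntegrableOn
        (fun t : ℝ => (2 ^ (2 * p)⁻¹ / (2 * p)⁻¹) * t ^ (-(p * (2 * p)⁻¹))) (Ioc 0 1) := by
      rw [hpε]
      exact ((intervalIntegral.intervalIntegrable_rpow' (by norm_num)).1).const_mul _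
    refine dom.mono' meas.restrict ?_
    filter_upwards [ae_restrict_mem measurableSet_Ioc] with t ⟨ht₀, ht₁⟩
    rw [norm_of_nonneg (nonneg t ht₀)]
    exact log_one_add_rpow_neg_le (by linarith) hε ht₀ ht₁
  · refine (integrableOn_Ioi_rpow_of_lt (neg_lt_neg hp) one_pos).mono' meas.restrict ?_
    filter_upwards [ae_restrict_mem measurableSet_Ioi] with t ht
    have ht₀ : 0 < t := one_pos.trans ht
    rw [norm_of_nonneg (nonneg t ht₀)]
    linarith [log_le_sub_one_of_pos (by positivity : 0 < 1 + t ^ (-p))]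

theorem log_one_add_mul_rpow_neg_eq {a p t : ℝ} (ha : 0 < a) (hp : p ≠ 0) (ht : 0 ≤ t) :
    log (1 + a * t ^ (-p)) = log (1 + ((a ^ p⁻¹)⁻¹ * t) ^ (-p)) := by
  rw [mul_rpow (by positivity) ht, inv_rpow (by positivity), ← rpow_mul ha.le, mul_neg,
    inv_mul_cancel₀ hp, rpow_neg_one, inv_inv]

theorem integrableOn_log_one_add_mul_rpow_neg {a p : ℝ} (ha : 0 < a) (hp : 1 < p) :
    IntegrableOn (fun t => log (1 + a * t ^ (-p))) (Ioi 0) := by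
  have hc : 0 < (a ^ p⁻¹)⁻¹ := by positivity
  refine IntegrableOn.congr_fun ?_
    (fun t ht => (log_one_add_mul_rpow_neg_eq ha (by linarith) (le_of_lt ht)).symm)
    measurableSet_Ioi
  rw [integrableOn_Ioi_comp_mul_left_iff (fun t => log (1 + t ^ (-p))) 0 hc, mul_zero]
  exact integrableOn_log_one_add_rpow_neg hp

theorem integral_Ioi_log_one_add_mul_rpow_neg {a p : ℝ} (ha : 0 < a) (hp : p ≠ 0) :
    ∫ t in Ioi 0, log (1 + a * t ^ (-p)) = a ^ p⁻¹ * ∫ t in Ioi 0, log (1 + t ^ (-p)) := by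
  rw [setIntegral_congr_fun measurableSet_Ioi
      fun t ht => log_one_add_mul_rpow_neg_eq ha hp (le_of_lt ht),
    integral_comp_mul_left_Ioi (fun t => log (1 + t ^ (-p))) 0 (by positivity), mul_zero, inv_inv,
    smul_eq_mul]

theorem tsum_pnat_log_one_add_mul_rpow_neg_le {a p : ℝ} (ha : 0 < a) (hp : 1 < p) :
    ∑' j : ℕ+, log (1 + a * (j : ℝ) ^ (-p)) ≤ a ^ p⁻¹ * ∫ t in Ioi 0, log (1 + t ^ (-p)) := by
  rw [← integral_Ioi_log_one_add_mul_rpow_neg ha (by linarith)]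
  exact (antitoneOn_log_one_add_mul_rpow_neg ha.le (by linarith)).tsum_pnat_le_integral_Ioi
    (integrableOn_log_one_add_mul_rpow_neg ha hp)
    fun t ht => log_one_add_mul_rpow_neg_nonneg ha.le ht.out.le

theorem stmt_0_general (d m : ℕ) (hd : 2 ≤ d) (C h δ : ℝ)
    (hC : 0 < C) (hh : 0 < h) (hδ0 : 0 < δ)
    (h2m : (d : ℝ) - 1 < 2 * m) :
    IntegrableOn (fun t : ℝ => Real.log (1 + t ^ (-(2 * (m : ℝ) / ((d : ℝ) - 1))))) (Ioi 0) ∧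
    ∑' j : ℕ+, Real.log (1 + C * δ⁻¹ * h ^ (-(2 * (m : ℝ))) *
        ((j : ℕ) : ℝ) ^ (-(2 * (m : ℝ) / ((d : ℝ) - 1)))) ≤
      (C ^ (((d : ℝ) - 1) / (2 * (m : ℝ))) *
        ∫ t in Ioi (0 : ℝ), Real.log (1 + t ^ (-(2 * (m : ℝ) / ((d : ℝ) - 1))))) *
        h ^ (-((d : ℝ) - 1)) * δ ^ (-(((d : ℝ) - 1) / (2 * (m : ℝ)))) := by
  have hd₁ : (0 : ℝ) < d - 1 := by
    have : (2 : ℝ) ≤ d := by exact_mod_cast hd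
    linarith
  have hm : (0 : ℝ) < m := by linarith
  have hp : 1 < 2 * (m : ℝ) / (d - 1) := (one_lt_div hd₁).2 h2m
  have scale : (C * δ⁻¹ * h ^ (-(2 * (m : ℝ)))) ^ (2 * (m : ℝ) / (d - 1))⁻¹ =
      C ^ ((d - 1) / (2 * (m : ℝ))) * h ^ (-((d : ℝ) - 1)) * δ ^ (-((d - 1) / (2 * (m : ℝ)))) := by
    have exponent : -(2 * (m : ℝ)) * ((d - 1) / (2 * m)) = -(d - 1) := by
      field_simp [hm.ne']
    rw [inv_div, mul_rpow (by positivity) (by positivity), mul_rpow hC.le (by positivity),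
      inv_rpow hδ0.le, ← rpow_neg hδ0.le, ← rpow_mul hh.le, exponent]
    ring
  refine ⟨integrableOn_log_one_add_rpow_neg hp, ?_⟩
  calc _ ≤ _ := tsum_pnat_log_one_add_mul_rpow_neg_le (by positivity) hp
    _ = _ := by rw [scale]; ring

/-- Key computation (3.12): the sum of logs is bounded by the scaled integral,
which is finite when `2m > d-1`. -/
theorem stmt_0 (d m : ℕ) (hd : 2 ≤ d) (hm : 1 ≤ m) (C h δ : ℝ)
    (hC : 0 < C) (hh : 0 < h) (hδ0 : 0 < δ) (hδ1 : δ ≤ 1)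
    (h2m : (d : ℝ) - 1 < 2 * m) :
    IntegrableOn (fun t : ℝ => Real.log (1 + t ^ (-(2 * (m : ℝ) / ((d : ℝ) - 1))))) (Ioi 0) ∧
    ∑' j : ℕ+, Real.log (1 + C * δ⁻¹ * h ^ (-(2 * (m : ℝ))) *
        ((j : ℕ) : ℝ) ^ (-(2 * (m : ℝ) / ((d : ℝ) - 1)))) ≤
      (C ^ (((d : ℝ) - 1) / (2 * (m : ℝ))) *
        ∫ t in Ioi (0 : ℝ), Real.log (1 + t ^ (-(2 * (m : ℝ) / ((d : ℝ) - 1))))) *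
        h ^ (-((d : ℝ) - 1)) * δ ^ (-(((d : ℝ) - 1) / (2 * (m : ℝ)))) :=
  stmt_0_general d m hd C h δ hC hh hδ0 h2m
end

section
/- Let K be a trace-class operator on a Hilbert space whose singular values satisfy μ_j(K) ≤ C δ^{-1} (h j^{1/(d-1)})^{-2m} for all j ≥ 1, where C, h, δ > 0, δ ≤ 1, d ≥ 2 and 2m > d - 1. Then log|det(I + K)| ≤ C' h^{-(d-1)} δ^{-(d-1)/(2m)} for some constant C' depending only on C, m, d. -/
/-!
Write `μ_j ≤ A j^{-p} = (B/j)^p` with `B = A^{1/p}` and `p > 1`, and split `∑ log (1 + (B/j)^p)`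
at `j = ⌊B⌋`. For `j ≤ B` the bound `log (1 + x) ≤ 2p x^{1/(2p)}` gives terms `2p √(B/j)`, which sum
to at most `4pB` by telescoping `√j - √(j-1) ≥ 1/(2√j)`. For `j > B` the bound `log (1 + x) ≤ x`
leaves `B^p ∑_{j > B} j^{-p}`, which comparison with `∫ x^{-p}` bounds by `p/(p-1) · B`.
For the theorem, `p = 2m/(d-1)` and `A = C δ⁻¹ h^{-2m}`, so that
`A^{1/p} = C^{1/p} h^{-(d-1)} δ^{-(d-1)/(2m)}`.
-/

open Real Finset

theorem log_one_add_le_rpow_div {x θ : ℝ} (hx : 0 ≤ x) (hθ : 0 < θ) (hθ1 : θ ≤ 1) :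
    log (1 + x) ≤ x ^ θ / θ := by
  rw [le_div_iff₀ hθ, mul_comm, ← log_rpow (by linarith)]
  have hsub := rpow_add_le_add_rpow zero_le_one hx hθ.le hθ1
  rw [one_rpow] at hsub
  linarith [log_le_sub_one_of_pos (rpow_pos_of_pos (by linarith : (0 : ℝ) < 1 + x) θ)]

theorem mul_rpow_sub_one_le_rpow_sub_rpow {q x : ℝ} (hq0 : 0 ≤ q) (hq1 : q ≤ 1) (hx : 1 ≤ x) :
    q * x ^ (q - 1) ≤ x ^ q - (x - 1) ^ q := by
  have hx0 : 0 < x := by linarith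
  have hinv : x⁻¹ ≤ 1 := inv_le_one_of_one_le₀ hx
  have hbern := rpow_one_add_le_one_add_mul_self (s := -x⁻¹) (by linarith) hq0 hq1
  have hfac : x - 1 = x * (1 + -x⁻¹) := by field_simp; ring
  rw [hfac, mul_rpow hx0.le (by linarith), rpow_sub_one hx0.ne']
  have hscaled := mul_le_mul_of_nonneg_left hbern (rpow_nonneg hx0.le q)
  have hexpand : x ^ q * (1 + q * -x⁻¹) = x ^ q - q * (x ^ q / x) := by field_simp; ring
  linarith

theorem sum_range_rpow_sub_one_le {q : ℝ} (hq0 : 0 < q) (hq1 : q ≤ 1) (N : ℕ) :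
    ∑ n ∈ range N, ((n : ℝ) + 1) ^ (q - 1) ≤ (N : ℝ) ^ q / q := by
  rw [le_div_iff₀ hq0, sum_mul]
  calc ∑ n ∈ range N, ((n : ℝ) + 1) ^ (q - 1) * q
      ≤ ∑ n ∈ range N, ((((n + 1 : ℕ) : ℝ)) ^ q - (n : ℝ) ^ q) := by
        gcongr with n
        have := mul_rpow_sub_one_le_rpow_sub_rpow hq0.le hq1 (x := n + 1) (by simp)
        push_cast
        simpa [mul_comm] using this
    _ = (N : ℝ) ^ q := by
        rw [sum_range_sub (fun n : ℕ => (n : ℝ) ^ q)]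
        simp [zero_rpow hq0.ne']

theorem sum_range_rpow_neg_le {s a : ℝ} (hs : 1 < s) (ha : 1 ≤ a) (k : ℕ) :
    ∑ i ∈ range k, (a + i) ^ (-s) ≤ s / (s - 1) * a ^ (1 - s) := by
  have ha0 : 0 < a := by linarith
  have hs1 : 0 < s - 1 := by linarith
  have hsplit : s / (s - 1) * a ^ (1 - s) = a ^ (1 - s) + a ^ (1 - s) / (s - 1) := by
    field_simp; ring
  rw [hsplit]
  cases k with
  | zero => simp only [range_zero, sum_empty]; positivity
  | succ k =>
    rw [sum_range_succ', Nat.cast_zero, add_zero, add_comm (∑ i ∈ range k, _)]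
    have hanti : AntitoneOn (fun x : ℝ => x ^ (-s)) (Set.Icc a (a + k)) :=
      fun x hx y _ hxy => rpow_le_rpow_of_nonpos (ha0.trans_le hx.1) hxy (by linarith)
    have hzero : (0 : ℝ) ∉ Set.uIcc a (a + k) := by
      rw [Set.uIcc_of_le (le_add_of_nonneg_right k.cast_nonneg)]
      exact fun h0 => by linarith [h0.1]
    have hint : ∫ x in a..a + k, x ^ (-s) = (a ^ (1 - s) - (a + k) ^ (1 - s)) / (s - 1) := by
      rw [integral_rpow (Or.inr ⟨by linarith, hzero⟩), show -s + 1 = 1 - s by ring]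
      rw [div_eq_div_iff (by linarith) (by linarith)]; ring
    have hhead : a ^ (-s) ≤ a ^ (1 - s) := rpow_le_rpow_of_exponent_le ha (by linarith)
    have htail : ∑ i ∈ range k, (a + ↑(i + 1)) ^ (-s) ≤ a ^ (1 - s) / (s - 1) :=
      calc _ ≤ ∫ x in a..a + k, x ^ (-s) := hanti.sum_le_integral
        _ ≤ a ^ (1 - s) / (s - 1) := by
          rw [hint]; gcongr; linarith [rpow_nonneg (by positivity : (0 : ℝ) ≤ a + k) (1 - s)]
    exact add_le_add hhead htail

theorem sum_range_floor_log_one_add_div_rpow_le {p B : ℝ} (hp : 1 / 2 ≤ p) (hB : 0 ≤ B) :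
    ∑ n ∈ range ⌊B⌋₊, log (1 + (B / (n + 1)) ^ p) ≤ 4 * p * B := by
  have hp0 : 0 < p := by linarith
  have hterm : ∀ n : ℕ, log (1 + (B / (n + 1)) ^ p)
      ≤ 2 * p * B ^ (1 / 2 : ℝ) * ((n : ℝ) + 1) ^ ((1 / 2 : ℝ) - 1) := by
    intro n
    have hn : (0 : ℝ) < n + 1 := by positivity
    calc log (1 + (B / (n + 1)) ^ p) ≤ ((B / (n + 1)) ^ p) ^ (1 / (2 * p)) / (1 / (2 * p)) :=
          log_one_add_le_rpow_div (by positivity) (by positivity)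
            (by rw [div_le_one (by positivity)]; linarith)
      _ = _ := by
        rw [← rpow_mul (by positivity), div_rpow hB hn.le,
          show (1 / 2 : ℝ) - 1 = -(1 / 2) by norm_num, rpow_neg hn.le]
        field_simp
  have hsq : B ^ (1 / 2 : ℝ) * B ^ (1 / 2 : ℝ) = B := by
    rw [← rpow_add' hB (by norm_num)]; norm_num
  calc ∑ n ∈ range ⌊B⌋₊, log (1 + (B / (n + 1)) ^ p)
      ≤ 2 * p * B ^ (1 / 2 : ℝ) * ∑ n ∈ range ⌊B⌋₊, ((n : ℝ) + 1) ^ ((1 / 2 : ℝ) - 1) := by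
        rw [mul_sum]; exact sum_le_sum fun n _ => hterm n
    _ ≤ 2 * p * B ^ (1 / 2 : ℝ) * ((⌊B⌋₊ : ℝ) ^ (1 / 2 : ℝ) / (1 / 2)) := by
        gcongr; exact sum_range_rpow_sub_one_le (by norm_num) (by norm_num) _
    _ ≤ 2 * p * B ^ (1 / 2 : ℝ) * (B ^ (1 / 2 : ℝ) / (1 / 2)) := by
        gcongr; exact Nat.floor_le hB
    _ = 4 * p * B := by rw [mul_div_assoc', mul_assoc (2 * p), hsq]; ring

theorem sum_range_log_one_add_div_floor_add_rpow_le {p B : ℝ} (hp : 1 < p) (hB : 0 ≤ B)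
    (M : ℕ) : ∑ i ∈ range M, log (1 + (B / ((⌊B⌋₊ + i : ℕ) + 1)) ^ p) ≤ p / (p - 1) * B := by
  set N := ⌊B⌋₊
  have hterm : ∀ i : ℕ, log (1 + (B / ((N + i : ℕ) + 1)) ^ p)
      ≤ B ^ p * ((N + 1 : ℝ) + i) ^ (-p) := by
    intro i
    have hi : (0 : ℝ) < N + 1 + i := by positivity
    calc log (1 + (B / ((N + i : ℕ) + 1)) ^ p) ≤ (B / ((N + i : ℕ) + 1)) ^ p := by
          linarith [log_le_sub_one_of_pos
            (by positivity : (0 : ℝ) < 1 + (B / ((N + i : ℕ) + 1)) ^ p)]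
      _ = B ^ p * ((N + 1 : ℝ) + i) ^ (-p) := by
        rw [div_rpow hB (by positivity), rpow_neg hi.le]; push_cast; ring_nf
  have hBN : B ^ p * (N + 1 : ℝ) ^ (1 - p) ≤ B := by
    rcases hB.eq_or_lt with rfl | hB0
    · rw [zero_rpow (by linarith), zero_mul]
    · calc B ^ p * (N + 1 : ℝ) ^ (1 - p) ≤ B ^ p * B ^ (1 - p) :=
            mul_le_mul_of_nonneg_left
              (rpow_le_rpow_of_nonpos hB0 (Nat.lt_floor_add_one B).le (by linarith)) (by positivity)
        _ = B := by rw [← rpow_add hB0]; norm_num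
  calc ∑ i ∈ range M, log (1 + (B / ((N + i : ℕ) + 1)) ^ p)
      ≤ B ^ p * ∑ i ∈ range M, ((N + 1 : ℝ) + i) ^ (-p) := by
        rw [mul_sum]; exact sum_le_sum fun i _ => hterm i
    _ ≤ B ^ p * (p / (p - 1) * (N + 1 : ℝ) ^ (1 - p)) := by
        gcongr; exact sum_range_rpow_neg_le hp (by simp) M
    _ ≤ p / (p - 1) * B := by rw [mul_left_comm]; gcongr

theorem sum_range_log_one_add_div_rpow_le {p B : ℝ} (hp : 1 < p) (hB : 0 ≤ B) (M : ℕ) :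
    ∑ n ∈ range M, log (1 + (B / (n + 1)) ^ p) ≤ (4 * p + p / (p - 1)) * B := by
  have hnonneg : ∀ n : ℕ, 0 ≤ log (1 + (B / (n + 1)) ^ p) := fun n =>
    log_nonneg (by simp only [le_add_iff_nonneg_right]; positivity)
  calc ∑ n ∈ range M, log (1 + (B / (n + 1)) ^ p)
      ≤ ∑ n ∈ range (⌊B⌋₊ + M), log (1 + (B / (n + 1)) ^ p) :=
        sum_le_sum_of_subset_of_nonneg (range_mono (Nat.le_add_left M _)) fun n _ _ => hnonneg n
    _ = ∑ n ∈ range ⌊B⌋₊, log (1 + (B / (n + 1)) ^ p)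
          + ∑ i ∈ range M, log (1 + (B / ((⌊B⌋₊ + i : ℕ) + 1)) ^ p) := sum_range_add _ _ _
    _ ≤ 4 * p * B + p / (p - 1) * B :=
        add_le_add (sum_range_floor_log_one_add_div_rpow_le (by linarith) hB)
          (sum_range_log_one_add_div_floor_add_rpow_le hp hB M)
    _ = (4 * p + p / (p - 1)) * B := by ring

theorem tsum_log_one_add_le_of_le_mul_rpow_neg {p A : ℝ} (hp : 1 < p) (hA : 0 ≤ A)
    {μ : ℕ+ → ℝ} (hμ0 : ∀ j, 0 ≤ μ j) (hμ : ∀ j : ℕ+, μ j ≤ A * ((j : ℕ) : ℝ) ^ (-p)) :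
    ∑' j, log (1 + μ j) ≤ (4 * p + p / (p - 1)) * A ^ (1 / p) := by
  set B := A ^ (1 / p)
  have hB : 0 ≤ B := rpow_nonneg hA _
  have hA_eq : A = B ^ p := by rw [← rpow_mul hA, one_div_mul_cancel (by linarith), rpow_one]
  set g : ℕ → ℝ := fun n => log (1 + (B / n) ^ p)
  have hg0 : ∀ n, 0 ≤ g n := fun n =>
    log_nonneg (by simp only [le_add_iff_nonneg_right]; positivity)
  have hμg : ∀ j : ℕ+, log (1 + μ j) ≤ g j := fun j => by
    have hj : (0 : ℝ) ≤ (j : ℕ) := Nat.cast_nonneg _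
    refine log_le_log (by linarith [hμ0 j]) ?_
    rw [div_rpow hB hj, ← hA_eq, div_eq_mul_inv, ← rpow_neg hj]
    linarith [hμ j]
  have hpartial : ∀ M, ∑ n ∈ range M, g (n + 1) ≤ (4 * p + p / (p - 1)) * B := fun M => by
    simpa [g] using sum_range_log_one_add_div_rpow_le hp hB M
  have hg : Summable fun j : ℕ+ => g j :=
    summable_pnat_iff_summable_succ.2 (summable_of_sum_range_le (fun n => hg0 _) hpartial)
  calc ∑' j, log (1 + μ j) ≤ ∑' j : ℕ+, g j :=
        Summable.tsum_le_tsum hμg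
          (hg.of_nonneg_of_le (fun j => log_nonneg (by linarith [hμ0 j])) hμg) hg
    _ = ∑' n : ℕ, g (n + 1) := tsum_pnat_eq_tsum_succ
    _ ≤ (4 * p + p / (p - 1)) * B := tsum_le_of_sum_range_le (fun n => hg0 _) hpartial

/-- Lemma 3.4 (estimate (3.11)) in abstract form. `μ j` are the singular values of a
trace-class operator `K`, and `Det = |det(I+K)|` is the modulus of its Fredholm
determinant, which satisfies `log Det ≤ ∑_j log(1 + μ_j(K))`. If
`μ_j(K) ≤ C δ⁻¹ (h j^{1/(d-1)})^{-2m}` with `2m > d-1`, then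
`log|det(I+K)| ≤ C' h^{-(d-1)} δ^{-(d-1)/(2m)}` with `C'` depending only on `C, m, d`. -/
theorem stmt_4 (C : ℝ) (hC : 0 < C) (d m : ℕ) (hd : 2 ≤ d) (h2m : (d : ℝ) - 1 < 2 * m) :
    ∃ C' : ℝ, 0 < C' ∧ ∀ (h δ : ℝ), 0 < h → 0 < δ → δ ≤ 1 →
      ∀ (μ : ℕ+ → ℝ) (Det : ℝ),
        (∀ j, 0 ≤ μ j) →
        (∀ j : ℕ+, μ j ≤ C * δ⁻¹ *
          (h * ((j : ℕ) : ℝ) ^ ((1 : ℝ) / ((d : ℝ) - 1))) ^ (-(2 * (m : ℝ)))) →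
        Real.log Det ≤ ∑' j : ℕ+, Real.log (1 + μ j) →
        Real.log Det ≤ C' * h ^ (-((d : ℝ) - 1)) * δ ^ (-(((d : ℝ) - 1) / (2 * (m : ℝ)))) := by
  have hd1 : (0 : ℝ) < d - 1 := by
    have : (2 : ℝ) ≤ d := by exact_mod_cast hd
    linarith
  have hm : (m : ℝ) ≠ 0 := by rintro hm; linarith
  set p := 2 * (m : ℝ) / (d - 1) with hp_def
  have hp : 1 < p := (one_lt_div hd1).2 h2m
  have hK : 0 < 4 * p + p / (p - 1) := by
    have : 0 < p / (p - 1) := div_pos (by linarith) (by linarith)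
    linarith
  refine ⟨(4 * p + p / (p - 1)) * C ^ (1 / p), mul_pos hK (rpow_pos_of_pos hC _), ?_⟩
  intro h δ hh hδ _ μ Det hμ0 hμ hDet
  have hμ' : ∀ j : ℕ+, μ j ≤ C * δ⁻¹ * h ^ (-(2 * (m : ℝ))) * ((j : ℕ) : ℝ) ^ (-p) := by
    intro j
    have hexp : 1 / ((d : ℝ) - 1) * -(2 * m) = -p := by rw [hp_def]; ring
    convert hμ j using 1
    rw [mul_rpow hh.le (by positivity), ← rpow_mul (by positivity), hexp, mul_assoc]
  calc Real.log Det ≤ ∑' j, log (1 + μ j) := hDet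
    _ ≤ (4 * p + p / (p - 1)) * (C * δ⁻¹ * h ^ (-(2 * (m : ℝ)))) ^ (1 / p) :=
        tsum_log_one_add_le_of_le_mul_rpow_neg hp (by positivity) hμ0 hμ'
    _ = _ := by
        have hexp : -(2 * (m : ℝ)) * (1 / p) = -((d : ℝ) - 1) := by rw [hp_def]; field_simp [hm]
        rw [mul_rpow (by positivity) (by positivity), mul_rpow hC.le (by positivity),
          inv_rpow hδ.le, ← rpow_neg hδ.le, ← rpow_mul hh.le, hexp, hp_def, one_div_div]
        ring
end

section
/- Let g be a function meromorphic on a neighborhood of the closed disc of radius 4θ centered at w₀ ∈ ℂ, with zeros {z_k} (counted with multiplicity) in the disc of radius 2θ and poles {y_k} (counted with multiplicity) in the disc of radius 4θ, and suppose the number of poles is at most P. Assume: (i) log|g(w₀)| ≥ -A with dist(w₀, {y_k}) ≥ δ > 0, δ ≤ 1; (ii) log|g(z)| ≤ A on the circle of some radius μ ∈ (3θ, 4θ) with dist to poles ≥ δ. Then the number of zeros of g in the disc of radius 2θ is at most C(A + P·(log(1/δ) + log(1/θ) + θ + 1)) for a constant C depending only on the ratio μ/θ. -/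
/-!
Clearing the poles turns (i) and (ii) into `e^{-A} δ^P ≤ |f w₀|` and `|f| ≤ e^A (8θ)^P` on the
circle `|z - w₀| = R := ρθ`. Replacing each zero factor `z - zₖ` by
`R² - conj (zₖ - w₀) (z - w₀)`, which has modulus `R |z - zₖ|` on that circle and `R²` at `w₀`,
the maximum modulus principle gives `Rⁿ |f w₀| ≤ (2θ)ⁿ sup_{circle} |f|`, because every zero lies
within `2θ` of `w₀`. Taking logarithms, `n log (ρ/2) ≤ 2A + P log (8θ/δ)`.
-/

open Metric Finset ComplexConjugate

section NormProd

variable {𝕜 : Type*} [NormedField 𝕜] {n : ℕ} {f : Fin n → 𝕜}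

lemma pow_le_norm_prod {δ : ℝ} (hδ : 0 ≤ δ) (h : ∀ i, δ ≤ ‖f i‖) : δ ^ n ≤ ‖∏ i, f i‖ := by
  rw [norm_prod, ← Fin.prod_const]
  exact prod_le_prod (fun _ _ => hδ) (fun i _ => h i)

lemma norm_prod_le_pow {r : ℝ} (h : ∀ i, ‖f i‖ ≤ r) : ‖∏ i, f i‖ ≤ r ^ n := by
  rw [norm_prod, ← Fin.prod_const]
  exact prod_le_prod (fun _ _ => norm_nonneg _) (fun i _ => h i)

end NormProd

section LogNormDiv

variable {𝕜 : Type*} [NormedDivisionRing 𝕜] {a b : 𝕜} {A : ℝ}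

lemma norm_le_exp_mul_of_log_norm_div_le (hb : b ≠ 0) (h : Real.log ‖a / b‖ ≤ A) :
    ‖a‖ ≤ Real.exp A * ‖b‖ := by
  rw [← div_le_iff₀ (norm_pos_iff.mpr hb), ← norm_div]
  exact Real.le_exp_of_log_le h

lemma exp_mul_le_norm_of_le_log_norm_div (ha : a ≠ 0) (hb : b ≠ 0) (h : A ≤ Real.log ‖a / b‖) :
    Real.exp A * ‖b‖ ≤ ‖a‖ := by
  rw [← le_div_iff₀ (norm_pos_iff.mpr hb), ← norm_div]
  exact (Real.le_log_iff_exp_le (norm_pos_iff.mpr (div_ne_zero ha hb))).mp h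

end LogNormDiv

section Poles

variable {𝕜 : Type*} [NormedField 𝕜] {P : ℕ} {y : Fin P → 𝕜} {a z : 𝕜} {A δ : ℝ}

lemma prod_sub_ne_zero_of_le_norm (hδ : 0 < δ) (hy : ∀ i, δ ≤ ‖z - y i‖) : ∏ i, (z - y i) ≠ 0 :=
  norm_pos_iff.mp ((pow_pos hδ P).trans_le (pow_le_norm_prod hδ.le hy))

lemma exp_mul_pow_le_norm_of_le_log_norm_div (hδ : 0 < δ) (hy : ∀ i, δ ≤ ‖z - y i‖) (ha : a ≠ 0)
    (h : A ≤ Real.log ‖a / ∏ i, (z - y i)‖) : Real.exp A * δ ^ P ≤ ‖a‖ :=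
  (mul_le_mul_of_nonneg_left (pow_le_norm_prod hδ.le hy) (Real.exp_pos _).le).trans
    (exp_mul_le_norm_of_le_log_norm_div ha (prod_sub_ne_zero_of_le_norm hδ hy) h)

lemma norm_le_exp_mul_pow_of_log_norm_div_le {r : ℝ} (hδ : 0 < δ) (hy : ∀ i, δ ≤ ‖z - y i‖)
    (hr : ∀ i, ‖z - y i‖ ≤ r) (h : Real.log ‖a / ∏ i, (z - y i)‖ ≤ A) :
    ‖a‖ ≤ Real.exp A * r ^ P :=
  (norm_le_exp_mul_of_log_norm_div_le (prod_sub_ne_zero_of_le_norm hδ hy) h).trans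
    (mul_le_mul_of_nonneg_left (norm_prod_le_pow hr) (Real.exp_pos _).le)

end Poles

lemma norm_sq_sub_conj_mul_eq {a c z : ℂ} {R : ℝ} (hz : ‖z - c‖ = R) :
    ‖(R : ℂ) ^ 2 - conj (a - c) * (z - c)‖ = R * ‖z - a‖ := by
  have hR : (R : ℂ) ^ 2 = (z - c) * conj (z - c) := by
    rw [Complex.mul_conj, Complex.normSq_eq_norm_sq, hz]; push_cast; ring
  have hfactor : (R : ℂ) ^ 2 - conj (a - c) * (z - c) = (z - c) * conj (z - a) := by
    rw [hR, map_sub, map_sub, map_sub]; ring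
  rw [hfactor, norm_mul, RCLike.norm_conj, hz]

theorem pow_mul_norm_le_of_forall_mem_sphere {h : ℂ → ℂ} {c : ℂ} {R r M : ℝ} {n : ℕ}
    {a : Fin n → ℂ} (hR : 0 < R) (hh : DifferentiableOn ℂ h (closedBall c R))
    (ha : ∀ i, ‖c - a i‖ ≤ r) (hM : ∀ z ∈ sphere c R, ‖h z * ∏ i, (z - a i)‖ ≤ M) :
    R ^ n * ‖h c * ∏ i, (c - a i)‖ ≤ r ^ n * M := by
  set B : ℂ → ℂ := fun z => h z * ∏ i, ((R : ℂ) ^ 2 - conj (a i - c) * (z - c))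
  have hB : DiffContOnCl ℂ B (ball c R) := by
    refine DifferentiableOn.diffContOnCl ?_
    rw [closure_ball c hR.ne']
    exact hh.mul (by fun_prop)
  have hB_sphere : ∀ z ∈ sphere c R, ‖B z‖ ≤ R ^ n * M := by
    intro z hz
    have hzc : ‖z - c‖ = R := mem_sphere_iff_norm.mp hz
    calc ‖B z‖ = R ^ n * ‖h z * ∏ i, (z - a i)‖ := by
          simp only [B, norm_mul, norm_prod, norm_sq_sub_conj_mul_eq hzc, prod_mul_distrib,
            Fin.prod_const]
          ring
      _ ≤ R ^ n * M := by gcongr; exact hM z hz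
  have hBc : ‖B c‖ ≤ R ^ n * M :=
    Complex.norm_le_of_forall_mem_frontier_norm_le isBounded_ball hB
      (by rwa [frontier_ball c hR.ne'])
      (by rw [closure_ball c hR.ne']; exact mem_closedBall_self hR.le)
  have hBc_eq : ‖B c‖ = R ^ n * (R ^ n * ‖h c‖) := by
    simp only [B, sub_self, mul_zero, sub_zero, norm_mul, norm_pow, Complex.norm_real,
      Real.norm_of_nonneg hR.le, Fin.prod_const]
    ring
  have hhc : R ^ n * ‖h c‖ ≤ M := le_of_mul_le_mul_left (hBc_eq ▸ hBc) (by positivity)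
  calc R ^ n * ‖h c * ∏ i, (c - a i)‖ = (R ^ n * ‖h c‖) * ‖∏ i, (c - a i)‖ := by
        rw [norm_mul]; ring
    _ ≤ M * r ^ n := mul_le_mul hhc (norm_prod_le_pow ha) (norm_nonneg _)
        ((by positivity : 0 ≤ R ^ n * ‖h c‖).trans hhc)
    _ = r ^ n * M := mul_comm _ _

lemma mul_log_div_two_le {ρ θ A δ : ℝ} {n P : ℕ} (hρ : 0 < ρ) (hθ : 0 < θ) (hδ : 0 < δ)
    (h : (ρ * θ) ^ n * (Real.exp (-A) * δ ^ P) ≤ (2 * θ) ^ n * (Real.exp A * (8 * θ) ^ P)) :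
    n * Real.log (ρ / 2) ≤ 2 * A + P * (Real.log (8 * θ) - Real.log δ) := by
  have := Real.log_le_log (by positivity) h
  rw [Real.log_mul (by positivity) (by positivity), Real.log_mul (by positivity) (by positivity),
    Real.log_mul (by positivity) (by positivity), Real.log_mul (by positivity) (by positivity),
    Real.log_pow, Real.log_pow, Real.log_pow, Real.log_pow, Real.log_exp, Real.log_exp,
    Real.log_mul hρ.ne' hθ.ne', Real.log_mul two_ne_zero hθ.ne'] at this
  rw [Real.log_div hρ.ne' two_ne_zero]
  linarith

lemma log_eight_mul_sub_log_le {θ δ : ℝ} (hθ : 0 < θ) (hδ : 0 < δ) (hδ1 : δ ≤ 1) :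
    Real.log (8 * θ) - Real.log δ ≤ 4 * (Real.log (1 / δ) + Real.log (1 / θ) + θ + 1) := by
  have h8 : Real.log 8 ≤ 7 := by
    linarith [Real.log_le_sub_one_of_pos (by norm_num : (0:ℝ) < 8)]
  have h2 : Real.log 2 ≤ 1 := by
    linarith [Real.log_le_sub_one_of_pos (by norm_num : (0:ℝ) < 2)]
  have hθ1 : Real.log θ ≤ θ - 1 := Real.log_le_sub_one_of_pos hθ
  have hθ2 : Real.log θ ≤ θ / 2 := by
    have := Real.log_le_sub_one_of_pos (half_pos hθ)
    rw [Real.log_div hθ.ne' two_ne_zero] at this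
    linarith
  have hδ0 : Real.log δ ≤ 0 := Real.log_nonpos hδ.le hδ1
  rw [Real.log_mul (by norm_num) hθ.ne', one_div, one_div, Real.log_inv, Real.log_inv]
  rcases le_total θ 2 with h | h <;> linarith

/-- The meromorphic `g` is `f / ∏ᵢ (z - y i)` with `f` analytic and the poles `y i` listed with
multiplicity; the zeros `zk i` of `g` in the disc of radius `2θ` are split off as
`f = hfun * ∏ᵢ (z - zk i)` with `hfun` analytic; and `μ = ρ θ`. -/
theorem stmt_8 (ρ : ℝ) (hρ1 : 3 < ρ) (hρ2 : ρ < 4) :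
    ∃ C : ℝ, 0 < C ∧
      ∀ (θ : ℝ), 0 < θ →
      ∀ (w₀ : ℂ) (A δ : ℝ) (P n : ℕ) (f hfun : ℂ → ℂ)
        (y : Fin P → ℂ) (zk : Fin n → ℂ),
        0 ≤ A → 0 < δ → δ ≤ 1 →
        AnalyticOn ℂ f (closedBall w₀ (4 * θ)) →
        AnalyticOn ℂ hfun (closedBall w₀ (4 * θ)) →
        (∀ i, y i ∈ closedBall w₀ (4 * θ)) →
        (∀ i, zk i ∈ closedBall w₀ (2 * θ)) →
        (∀ z ∈ closedBall w₀ (4 * θ), f z = hfun z * ∏ i, (z - zk i)) →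
        f w₀ ≠ 0 →
        (∀ i, δ ≤ ‖w₀ - y i‖) →
        (-A ≤ Real.log ‖f w₀ / ∏ i, (w₀ - y i)‖) →
        (∀ z ∈ sphere w₀ (ρ * θ),
          (∀ i, δ ≤ ‖z - y i‖) ∧ Real.log ‖f z / ∏ i, (z - y i)‖ ≤ A) →
        (n : ℝ) ≤ C * (A + (P : ℝ) * (Real.log (1 / δ) + Real.log (1 / θ) + θ + 1)) := by
  have hlog : 0 < Real.log (ρ / 2) := Real.log_pos (by linarith)
  refine ⟨4 / Real.log (ρ / 2), by positivity, ?_⟩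
  intro θ hθ w₀ A δ P n f hfun y zk hA hδ hδ1 _ hh hy hzk hfac hf0 hwy hlow hsph
  have hρθ : ρ * θ ≤ 4 * θ := by nlinarith
  have hball : closedBall w₀ (ρ * θ) ⊆ closedBall w₀ (4 * θ) := closedBall_subset_closedBall hρθ
  have h_center : Real.exp (-A) * δ ^ P ≤ ‖f w₀‖ :=
    exp_mul_pow_le_norm_of_le_log_norm_div hδ hwy hf0 hlow
  have h_sphere : ∀ z ∈ sphere w₀ (ρ * θ),
      ‖hfun z * ∏ i, (z - zk i)‖ ≤ Real.exp A * (8 * θ) ^ P := by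
    intro z hz
    obtain ⟨hzy, hzA⟩ := hsph z hz
    rw [← hfac z (hball (sphere_subset_closedBall hz))]
    refine norm_le_exp_mul_pow_of_log_norm_div_le hδ hzy (fun i => ?_) hzA
    have hzw : ‖z - w₀‖ = ρ * θ := mem_sphere_iff_norm.mp hz
    have hwy : ‖w₀ - y i‖ ≤ 4 * θ := by simpa [dist_eq_norm, norm_sub_rev] using hy i
    linarith [norm_sub_le_norm_sub_add_norm_sub z w₀ (y i)]
  have h_count := pow_mul_norm_le_of_forall_mem_sphere (by positivity)
    (hh.mono hball).differentiableOn
    (fun i => by simpa [dist_eq_norm, norm_sub_rev] using hzk i) h_sphere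
  rw [← hfac w₀ (mem_closedBall_self (by positivity))] at h_count
  have h_log := mul_log_div_two_le (by linarith) hθ hδ
    ((mul_le_mul_of_nonneg_left h_center (by positivity)).trans h_count)
  rw [div_mul_eq_mul_div, le_div_iff₀ hlog]
  linarith [mul_le_mul_of_nonneg_left (log_eight_mul_sub_log_le hθ hδ hδ1) (Nat.cast_nonneg P)]
end

section
/- Let K(z) be invertible with (I + K(z)) invertible, where K is trace class with singular values μ_j(K) ≤ C h^{-2m} j^{-2m/(d-1)} and ‖(I + K)^{-1}‖ ≤ C h^{-ℓ}. Then the singular values of K̃ = -(I + K)^{-1} K satisfy μ_j(K̃) ≤ C² h^{-ℓ-2m} j^{-2m/(d-1)}, and consequently det(I + K̃) = det(I + K)^{-1} and log(1/|det(I+K)|) ≤ C' h^{-(d-1)}(h^{-ℓ-2m})^{(d-1)/(2m)} for 2m > d - 1. -/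
/-!
Since `μⱼ(AB) ≤ ‖A‖ μⱼ(B)`, the singular values of `K̃ = -(1 + K)⁻¹ K` inherit the decay of those
of `K`, up to the factor `‖(1 + K)⁻¹‖`. As `(1 + K)(1 + K̃) = 1`, `det (1 + K̃) = det (1 + K)⁻¹`, so
`log (1 / |det (1 + K)|) = log |det (1 + K̃)| ≤ ∑ log (1 + μⱼ(K̃))`. Bounding `log (1 + x) ≤ x ^ θ / θ`
with `θ` slightly above `(d - 1) / (2m)` makes this sum `O(M ^ θ)` for `M = C² h^{-ℓ-2m}`, and for `θ`
close enough the excess `M ^ (θ - (d - 1) / (2m))` is absorbed by the factor `h^{-(d-1)}`.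
-/

/-- The `j`-th singular value (approximation number) of an operator on a Hilbert
space, for `j ≥ 1`: the distance from `A` to the operators of rank `< j`. -/
noncomputable def singularValue' {H : Type*} [NormedAddCommGroup H] [InnerProductSpace ℂ H]
    (A : H →L[ℂ] H) (j : ℕ) : ℝ :=
  sInf {r : ℝ | ∃ F : H →L[ℂ] H,
    Module.finrank ℂ (LinearMap.range (F : H →ₗ[ℂ] H)) < j ∧ r = ‖A - F‖}

open Module Real

section SingularValue

variable {H : Type*} [NormedAddCommGroup H] [InnerProductSpace ℂ H]

lemma singularValue'_nonneg (A : H →L[ℂ] H) (j : ℕ) : 0 ≤ singularValue' A j :=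
  Real.sInf_nonneg <| by rintro _ ⟨F, -, rfl⟩; exact norm_nonneg _

lemma singularValue'_le_norm_sub (A : H →L[ℂ] H) {j : ℕ} {F : H →L[ℂ] H}
    (hF : finrank ℂ (LinearMap.range (F : H →ₗ[ℂ] H)) < j) : singularValue' A j ≤ ‖A - F‖ :=
  csInf_le ⟨0, by rintro _ ⟨F, -, rfl⟩; exact norm_nonneg _⟩ ⟨F, hF, rfl⟩

lemma exists_norm_sub_le_of_not_finiteDimensional_range (hH : ¬ FiniteDimensional ℂ H)
    (A : H →L[ℂ] H) {ε : ℝ} (hε : 0 < ε) :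
    ∃ F : H →L[ℂ] H, ¬ FiniteDimensional ℂ (LinearMap.range (F : H →ₗ[ℂ] H)) ∧ ‖A - F‖ ≤ ε := by
  by_cases hA : FiniteDimensional ℂ (LinearMap.range (A : H →ₗ[ℂ] H))
  · refine ⟨A - ε • 1, fun hF => hH ?_, ?_⟩
    · have hsup : LinearMap.range ((A - ε • 1 : H →L[ℂ] H) : H →ₗ[ℂ] H)
          ⊔ LinearMap.range (A : H →ₗ[ℂ] H) = ⊤ := by
        refine Submodule.eq_top_iff'.2 fun x => Submodule.mem_sup.2
          ⟨_, LinearMap.mem_range_self _ (-ε⁻¹ • x), _, LinearMap.mem_range_self _ (ε⁻¹ • x), ?_⟩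
        simp [smul_smul, hε.ne']
      have : FiniteDimensional ℂ (⊤ : Submodule ℂ H) := hsup ▸ inferInstance
      exact Submodule.topEquiv.finiteDimensional
    · rw [sub_sub_cancel, norm_smul, Real.norm_of_nonneg hε.le]
      exact mul_le_of_le_one_right hε.le ContinuousLinearMap.norm_id_le
  · exact ⟨A, hA, by simpa using hε.le⟩

/-- `finrank` is `0` on infinite-dimensional spaces, so there every operator of infinite rank
competes in the infimum defining `singularValue'`. -/
lemma singularValue'_eq_zero_of_not_finiteDimensional (hH : ¬ FiniteDimensional ℂ H)
    (A : H →L[ℂ] H) {j : ℕ} (hj : 0 < j) : singularValue' A j = 0 := by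
  refine le_antisymm (le_of_forall_pos_le_add fun ε hε => ?_) (singularValue'_nonneg A j)
  obtain ⟨F, hF, hAF⟩ := exists_norm_sub_le_of_not_finiteDimensional_range hH A hε
  have hF0 : finrank ℂ (LinearMap.range (F : H →ₗ[ℂ] H)) < j := by
    rwa [finrank_of_infinite_dimensional hF]
  linarith [singularValue'_le_norm_sub A hF0]

lemma singularValue'_mul_le (A B : H →L[ℂ] H) {j : ℕ} (hj : 0 < j) :
    singularValue' (A * B) j ≤ ‖A‖ * singularValue' B j := by
  by_cases hH : FiniteDimensional ℂ H
  swap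
  · rw [singularValue'_eq_zero_of_not_finiteDimensional hH _ hj]
    exact mul_nonneg (norm_nonneg A) (singularValue'_nonneg B j)
  have hne : {r : ℝ | ∃ F : H →L[ℂ] H,
      finrank ℂ (LinearMap.range (F : H →ₗ[ℂ] H)) < j ∧ r = ‖B - F‖}.Nonempty :=
    ⟨‖B - 0‖, 0, by rwa [ContinuousLinearMap.toLinearMap_zero, LinearMap.range_zero, finrank_bot],
      rfl⟩
  refine (le_csInf hne.smul_set ?_).trans_eq (Real.sInf_smul_of_nonneg (norm_nonneg A) _)
  rintro _ ⟨_, ⟨F, hF, rfl⟩, rfl⟩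
  have hAF : finrank ℂ (LinearMap.range ((A * F : H →L[ℂ] H) : H →ₗ[ℂ] H)) < j := by
    refine lt_of_le_of_lt ?_ hF
    rw [ContinuousLinearMap.toLinearMap_mul, Module.End.mul_eq_comp, LinearMap.range_comp]
    exact Submodule.finrank_map_le _ _
  calc singularValue' (A * B) j ≤ ‖A * B - A * F‖ := singularValue'_le_norm_sub _ hAF
    _ = ‖A * (B - F)‖ := by rw [mul_sub]
    _ ≤ ‖A‖ • ‖B - F‖ := norm_mul_le _ _

end SingularValue

lemma mul_one_add_neg_inverse_mul {R : Type*} [Ring R] {a : R} (ha : IsUnit (1 + a)) :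
    (1 + a) * (1 + -Ring.inverse (1 + a) * a) = 1 := by
  rw [mul_add, mul_one, neg_mul, mul_neg, ← mul_assoc, Ring.mul_inverse_cancel _ ha, one_mul,
    add_neg_cancel_right]

namespace Real

lemma log_one_add_le_rpow_div {θ x : ℝ} (hθ0 : 0 < θ) (hθ1 : θ ≤ 1) (hx : 0 ≤ x) :
    log (1 + x) ≤ x ^ θ / θ := by
  have h1x : 0 < 1 + x := by linarith
  rw [le_div_iff₀ hθ0]
  calc log (1 + x) * θ = log ((1 + x) ^ θ) := by rw [log_rpow h1x, mul_comm]
    _ ≤ (1 + x) ^ θ - 1 := log_le_sub_one_of_pos (rpow_pos_of_pos h1x θ)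
    _ ≤ x ^ θ := by linarith [rpow_add_le_add_rpow zero_le_one hx hθ0.le hθ1, one_rpow θ]

lemma summable_pnat_rpow_neg {p : ℝ} (hp : 1 < p) :
    Summable fun j : ℕ+ => ((j : ℕ) : ℝ) ^ (-p) :=
  (summable_nat_rpow.2 (by linarith)).comp_injective PNat.coe_injective

lemma tsum_log_one_add_le_of_le_mul_rpow {μ : ℕ+ → ℝ} {M α θ : ℝ} (hμ0 : ∀ j, 0 ≤ μ j)
    (hμ : ∀ j : ℕ+, μ j ≤ M * ((j : ℕ) : ℝ) ^ (-α)) (hθ0 : 0 < θ) (hθ1 : θ ≤ 1)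
    (hαθ : 1 < α * θ) :
    ∑' j, log (1 + μ j) ≤ M ^ θ / θ * ∑' j : ℕ+, ((j : ℕ) : ℝ) ^ (-(α * θ)) := by
  have hM : 0 ≤ M := by simpa using (hμ0 1).trans (hμ 1)
  have hsum := (summable_pnat_rpow_neg hαθ).mul_left (M ^ θ / θ)
  have hle : ∀ j : ℕ+, log (1 + μ j) ≤ M ^ θ / θ * ((j : ℕ) : ℝ) ^ (-(α * θ)) := fun j => by
    have hj : (0 : ℝ) ≤ (j : ℕ) := Nat.cast_nonneg _
    calc log (1 + μ j) ≤ log (1 + M * ((j : ℕ) : ℝ) ^ (-α)) :=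
          log_le_log (by linarith [hμ0 j]) (by linarith [hμ j])
      _ ≤ (M * ((j : ℕ) : ℝ) ^ (-α)) ^ θ / θ := log_one_add_le_rpow_div hθ0 hθ1 (by positivity)
      _ = M ^ θ / θ * ((j : ℕ) : ℝ) ^ (-(α * θ)) := by
          rw [mul_rpow hM (by positivity), ← rpow_mul hj]
          ring_nf
  calc ∑' j, log (1 + μ j) ≤ ∑' j : ℕ+, M ^ θ / θ * ((j : ℕ) : ℝ) ^ (-(α * θ)) :=
        Summable.tsum_le_tsum hle
          (.of_nonneg_of_le (fun j => log_nonneg (by linarith [hμ0 j])) hle hsum) hsum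
    _ = _ := tsum_mul_left

lemma mul_rpow_neg_le_of_le_one {h c P θ s E : ℝ} (h0 : 0 < h) (h1 : h ≤ 1) (hc : 0 ≤ c)
    (hE : P * (θ - s) ≤ E) : (c * h ^ (-P)) ^ θ ≤ c ^ θ * h ^ (-E) * (h ^ (-P)) ^ s := by
  have hsplit : (h ^ (-P)) ^ θ = h ^ (-(P * (θ - s))) * (h ^ (-P)) ^ s := by
    rw [← rpow_mul h0.le, ← rpow_mul h0.le, ← rpow_add h0]
    ring_nf
  rw [mul_rpow hc (rpow_nonneg h0.le _), hsplit, ← mul_assoc]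
  exact mul_le_mul_of_nonneg_right (mul_le_mul_of_nonneg_left
    (rpow_le_rpow_of_exponent_ge h0 h1 (by linarith)) (by positivity)) (by positivity)

end Real

open Filter Topology in
lemma exists_inv_lt_le_one_mul_sub_inv_le {α : ℝ} (hα : 1 < α) (P : ℝ) {E : ℝ} (hE : 0 < E) :
    ∃ θ, α⁻¹ < θ ∧ θ ≤ 1 ∧ P * (θ - α⁻¹) ≤ E := by
  have hlt_one : ∀ᶠ θ in 𝓝 α⁻¹, θ < 1 := eventually_lt_nhds (inv_lt_one_of_one_lt₀ hα)
  have hlt_E : ∀ᶠ θ in 𝓝 α⁻¹, P * (θ - α⁻¹) < E := by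
    have : Tendsto (fun θ => P * (θ - α⁻¹)) (𝓝 α⁻¹) (𝓝 0) :=
      (continuous_const.mul (continuous_id.sub continuous_const)).tendsto' _ _ (by simp)
    exact this.eventually_lt_const hE
  obtain ⟨θ, ⟨hθ1, hθE⟩, hθ⟩ :=
    (((hlt_one.and hlt_E).filter_mono nhdsWithin_le_nhds).and
      (self_mem_nhdsWithin : ∀ᶠ θ in 𝓝[>] α⁻¹, α⁻¹ < θ)).exists
  exact ⟨θ, hθ, hθ1.le, hθE.le⟩

theorem stmt_16_general {H : Type*} [NormedAddCommGroup H] [InnerProductSpace ℂ H]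
    (C ℓ : ℝ) (hC : 0 < C) (d m : ℕ) (hd : 2 ≤ d) (h2m : (d : ℝ) - 1 < 2 * m) :
    ∃ C' : ℝ, 0 < C' ∧
      ∀ (h : ℝ), 0 < h → h ≤ 1 →
      ∀ (K : H →L[ℂ] H), IsCompactOperator K →
      (∀ j : ℕ+, singularValue' K j
        ≤ C * h ^ (-(2 * (m : ℝ))) * ((j : ℕ) : ℝ) ^ (-(2 * (m : ℝ) / ((d : ℝ) - 1)))) →
      IsUnit ((1 : H →L[ℂ] H) + K) →
      ‖Ring.inverse ((1 : H →L[ℂ] H) + K)‖ ≤ C * h ^ (-ℓ) →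
      ∀ (Det : (H →L[ℂ] H) → ℂ),
        Det 1 = 1 →
        (Det (((1 : H →L[ℂ] H) + K) *
            ((1 : H →L[ℂ] H) + (-(Ring.inverse ((1 : H →L[ℂ] H) + K)) * K)))
          = Det ((1 : H →L[ℂ] H) + K) *
            Det ((1 : H →L[ℂ] H) + (-(Ring.inverse ((1 : H →L[ℂ] H) + K)) * K))) →
        (∀ T : H →L[ℂ] H, ‖Det ((1 : H →L[ℂ] H) + T)‖
          ≤ Real.exp (∑' j : ℕ+, Real.log (1 + singularValue' T j))) →
        (∀ j : ℕ+, singularValue' (-(Ring.inverse ((1 : H →L[ℂ] H) + K)) * K) j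
            ≤ C ^ 2 * h ^ (-(ℓ + 2 * (m : ℝ))) *
              ((j : ℕ) : ℝ) ^ (-(2 * (m : ℝ) / ((d : ℝ) - 1)))) ∧
        Det ((1 : H →L[ℂ] H) + (-(Ring.inverse ((1 : H →L[ℂ] H) + K)) * K))
          = (Det ((1 : H →L[ℂ] H) + K))⁻¹ ∧
        Real.log (1 / ‖Det ((1 : H →L[ℂ] H) + K)‖)
          ≤ C' * h ^ (-((d : ℝ) - 1)) *
            (h ^ (-(ℓ + 2 * (m : ℝ)))) ^ (((d : ℝ) - 1) / (2 * (m : ℝ))) := by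
  have hd1 : (0 : ℝ) < d - 1 := by
    have : (2 : ℝ) ≤ d := by exact_mod_cast hd
    linarith
  set α := 2 * (m : ℝ) / (d - 1) with hα_def
  set P := ℓ + 2 * (m : ℝ) with hP_def
  have hα : 1 < α := (one_lt_div hd1).2 h2m
  obtain ⟨θ, hθα, hθ1, hθP⟩ := exists_inv_lt_le_one_mul_sub_inv_le hα P hd1
  have hθ0 : 0 < θ := (inv_pos.2 (by linarith)).trans hθα
  have hαθ : 1 < α * θ := by rwa [← inv_lt_iff_one_lt_mul₀' (by linarith)]
  set Z := ∑' j : ℕ+, ((j : ℕ) : ℝ) ^ (-(α * θ))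
  have hZ : 0 < Z := (summable_pnat_rpow_neg hαθ).tsum_pos (fun _ => by positivity) 1 (by simp)
  refine ⟨(C ^ 2) ^ θ * Z / θ, by positivity,
    fun h h0 h1 K _ hK hunit hinv Det hDet1 hDetmul hDetbound => ?_⟩
  set Kt := -Ring.inverse (1 + K) * K
  have hKt : ∀ j : ℕ+, singularValue' Kt j ≤ C ^ 2 * h ^ (-P) * ((j : ℕ) : ℝ) ^ (-α) := fun j =>
    calc singularValue' Kt j ≤ ‖-Ring.inverse (1 + K)‖ * singularValue' K j :=
          singularValue'_mul_le _ _ j.pos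
      _ ≤ C * h ^ (-ℓ) * (C * h ^ (-(2 * (m : ℝ))) * ((j : ℕ) : ℝ) ^ (-α)) := by
          rw [norm_neg]
          exact mul_le_mul hinv (hK j) (singularValue'_nonneg _ _) (by positivity)
      _ = C ^ 2 * h ^ (-P) * ((j : ℕ) : ℝ) ^ (-α) := by
          rw [hP_def, neg_add, rpow_add h0]
          ring
  have hdet : Det (1 + K) * Det (1 + Kt) = 1 := by
    rw [← hDetmul, mul_one_add_neg_inverse_mul hunit, hDet1]
  have hdet_pos : 0 < ‖Det (1 + Kt)‖ := norm_pos_iff.2 (right_ne_zero_of_mul_eq_one hdet)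
  refine ⟨hKt, eq_inv_of_mul_eq_one_right hdet, ?_⟩
  rw [← inv_div (2 * (m : ℝ)), ← hα_def]
  calc log (1 / ‖Det (1 + K)‖) = log ‖Det (1 + Kt)‖ := by
        rw [eq_inv_of_mul_eq_one_right hdet, norm_inv, one_div]
    _ ≤ ∑' j : ℕ+, log (1 + singularValue' Kt j) := (log_le_iff_le_exp hdet_pos).2 (hDetbound Kt)
    _ ≤ (C ^ 2 * h ^ (-P)) ^ θ / θ * Z :=
        tsum_log_one_add_le_of_le_mul_rpow (fun j => singularValue'_nonneg _ _) hKt hθ0 hθ1 hαθ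
    _ ≤ (C ^ 2) ^ θ * h ^ (-((d : ℝ) - 1)) * (h ^ (-P)) ^ α⁻¹ / θ * Z := by
        gcongr
        exact mul_rpow_neg_le_of_le_one h0 h1 (by positivity) hθP
    _ = (C ^ 2) ^ θ * Z / θ * h ^ (-((d : ℝ) - 1)) * (h ^ (-P)) ^ α⁻¹ := by ring

/-- Abstract form of the proof of (3.14) in Lemma 3.5: if `K` is trace class with
`μ_j(K) ≤ C h^{-2m} j^{-2m/(d-1)}` and `‖(I+K)⁻¹‖ ≤ C h^{-ℓ}`, then
`K̃ = -(I+K)⁻¹K` has `μ_j(K̃) ≤ C² h^{-ℓ-2m} j^{-2m/(d-1)}`, the Fredholm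
determinants satisfy `det(I+K̃) = det(I+K)⁻¹` (here `Det` is any determinant
functional with the two standard properties `Det 1 = 1`, multiplicativity on the
relevant pair, and the bound `|Det(1+T)| ≤ exp ∑ log(1+μ_j(T))`), and
`log(1/|det(I+K)|) ≤ C' h^{-(d-1)} (h^{-ℓ-2m})^{(d-1)/(2m)}` when `2m > d-1`. -/
theorem stmt_16 {H : Type*} [NormedAddCommGroup H] [InnerProductSpace ℂ H] [CompleteSpace H]
    (C ℓ : ℝ) (hC : 0 < C) (d m : ℕ) (hd : 2 ≤ d) (h2m : (d : ℝ) - 1 < 2 * m) :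
    ∃ C' : ℝ, 0 < C' ∧
      ∀ (h : ℝ), 0 < h → h ≤ 1 →
      ∀ (K : H →L[ℂ] H), IsCompactOperator K →
      (∀ j : ℕ+, singularValue' K j
        ≤ C * h ^ (-(2 * (m : ℝ))) * ((j : ℕ) : ℝ) ^ (-(2 * (m : ℝ) / ((d : ℝ) - 1)))) →
      IsUnit ((1 : H →L[ℂ] H) + K) →
      ‖Ring.inverse ((1 : H →L[ℂ] H) + K)‖ ≤ C * h ^ (-ℓ) →
      ∀ (Det : (H →L[ℂ] H) → ℂ),
        Det 1 = 1 →
        (Det (((1 : H →L[ℂ] H) + K) *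
            ((1 : H →L[ℂ] H) + (-(Ring.inverse ((1 : H →L[ℂ] H) + K)) * K)))
          = Det ((1 : H →L[ℂ] H) + K) *
            Det ((1 : H →L[ℂ] H) + (-(Ring.inverse ((1 : H →L[ℂ] H) + K)) * K))) →
        (∀ T : H →L[ℂ] H, ‖Det ((1 : H →L[ℂ] H) + T)‖
          ≤ Real.exp (∑' j : ℕ+, Real.log (1 + singularValue' T j))) →
        (∀ j : ℕ+, singularValue' (-(Ring.inverse ((1 : H →L[ℂ] H) + K)) * K) j
            ≤ C ^ 2 * h ^ (-(ℓ + 2 * (m : ℝ))) *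
              ((j : ℕ) : ℝ) ^ (-(2 * (m : ℝ) / ((d : ℝ) - 1)))) ∧
        Det ((1 : H →L[ℂ] H) + (-(Ring.inverse ((1 : H →L[ℂ] H) + K)) * K))
          = (Det ((1 : H →L[ℂ] H) + K))⁻¹ ∧
        Real.log (1 / ‖Det ((1 : H →L[ℂ] H) + K)‖)
          ≤ C' * h ^ (-((d : ℝ) - 1)) *
            (h ^ (-(ℓ + 2 * (m : ℝ)))) ^ (((d : ℝ) - 1) / (2 * (m : ℝ))) :=
  stmt_16_general C ℓ hC d m hd h2m
end
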